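/- If γ ≤ π(w₀) and w is a solution with parameters (w₀,γ), then w is strictly decreasing on (0,∞) and w(x) → −∞ as x → ∞. -/

import Mathlib

open Set MeasureTheory Filter Topology

/-- `piU U c w = min_{μ ∈ U} (μ·w + c(μ))`, realized as an infimum. -/
noncomputable def piU (U : Set ℝ) (c : ℝ → ℝ) (w : ℝ) : ℝ :=
  sInf ((fun μ => μ * w + c μ) '' U)

/-- `w` is a continuously differentiable solution on `[0,∞)` of
`(σ²/2)·w′(x) + π(w(x)) + h(x) = γ` with `w(0) = w₀`, with derivative `w'`. -/
def IsSolution (σ : ℝ) (U : Set ℝ) (c h : ℝ → ℝ) (w₀ γ : ℝ) (w w' : ℝ → ℝ) : Prop :=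
  w 0 = w₀ ∧ ContinuousOn w' (Set.Ici 0) ∧
  (∀ x ∈ Set.Ici (0:ℝ), HasDerivWithinAt w (w' x) (Set.Ici 0) x) ∧
  (∀ x ∈ Set.Ici (0:ℝ), σ ^ 2 / 2 * w' x + piU U c (w x) + h x = γ)

/-! Since `π` is Lipschitz and `h ≥ 0`, a one-sided Gronwall argument shows `w ≤ w₀`. For `δ > 0`
the shift `w (· + δ)` solves the equation with `h` replaced by the larger `h (· + δ)`, so it is a
strict subsolution starting below `w`, and the comparison principle gives `w (x + δ) ≤ w x`. A
plateau of `w` would make `h` constant there, so `w` decreases strictly. Finally, were `w` bounded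
below, `π (w x)` would stay bounded while `h x → ∞`, forcing `w' ≤ -1` eventually. -/

section piU

variable {U : Set ℝ} {c : ℝ → ℝ}

lemma piU_le_of_mem (hUcpt : IsCompact U) (hc : Continuous c) (v : ℝ) {μ : ℝ} (hμ : μ ∈ U) :
    piU U c v ≤ μ * v + c μ :=
  csInf_le (hUcpt.image (by fun_prop)).bddBelow (mem_image_of_mem _ hμ)

lemma exists_mem_piU_eq (hUne : U.Nonempty) (hUcpt : IsCompact U) (hc : Continuous c) (v : ℝ) :
    ∃ μ ∈ U, μ * v + c μ = piU U c v :=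
  (hUcpt.image (f := fun μ => μ * v + c μ) (by fun_prop)).sInf_mem (hUne.image _)

lemma exists_lipschitzWith_piU (hUne : U.Nonempty) (hUcpt : IsCompact U) (hc : Continuous c) :
    ∃ K, LipschitzWith K (piU U c) := by
  obtain ⟨K, hK⟩ := hUcpt.isBounded.exists_norm_le
  refine ⟨_, LipschitzWith.of_le_add_mul' K fun u v => ?_⟩
  obtain ⟨μ, hμ, hμv⟩ := exists_mem_piU_eq hUne hUcpt hc v
  have hμK : μ * (u - v) ≤ K * dist u v :=
    calc μ * (u - v) ≤ |μ| * |u - v| := by rw [← abs_mul]; exact le_abs_self _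
    _ ≤ K * dist u v := by rw [Real.dist_eq]; gcongr; exact hK μ hμ
  calc piU U c u ≤ μ * u + c μ := piU_le_of_mem hUcpt hc u hμ
  _ = piU U c v + μ * (u - v) := by rw [← hμv]; ring
  _ ≤ piU U c v + K * dist u v := by gcongr

end piU

lemma nonpos_of_hasDerivWithinAt_le_mul {f f' : ℝ → ℝ} {K a b : ℝ}
    (hf : ContinuousOn f (Icc a b)) (hf' : ∀ x ∈ Ico a b, HasDerivWithinAt f (f' x) (Ici x) x)
    (ha : f a ≤ 0) (bound : ∀ x ∈ Ico a b, 0 ≤ f x → f' x ≤ K * f x) :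
    ∀ x ∈ Icc a b, f x ≤ 0 := by
  intro x hx
  set E := fun y => Real.exp ((|K| + 1) * (y - a))
  have hE : ∀ y, HasDerivAt E ((|K| + 1) * E y) y := fun y => by
    simpa [E, mul_comm] using ((hasDerivAt_id y).sub_const a |>.const_mul (|K| + 1)).exp
  have hfE : ∀ ε > 0, f x ≤ ε * E x := by
    intro ε hε
    refine image_le_of_deriv_right_lt_deriv_boundary' hf hf' (B := fun y => ε * E y)
      (by simpa [E] using ha.trans hε.le)
      (fun y _ => ((hE y).const_mul ε).continuousAt.continuousWithinAt)
      (fun y _ => ((hE y).const_mul ε).hasDerivWithinAt) (fun y hy hfy => ?_) hx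
    have hpos : 0 < ε * E y := by positivity
    calc f' y ≤ K * f y := bound y hy (hfy ▸ hpos.le)
    _ ≤ |K| * (ε * E y) := by rw [hfy]; gcongr; exact le_abs_self K
    _ < ε * ((|K| + 1) * E y) := by nlinarith
  have hlim : Tendsto (fun ε => ε * E x) (𝓝[>] 0) (𝓝 0) := by
    simpa using (tendsto_id.mul_const (E x)).mono_left (nhdsWithin_le_nhds (a := (0 : ℝ)))
  exact ge_of_tendsto hlim (eventually_nhdsWithin_of_forall hfE)

lemma tendsto_atBot_of_hasDerivAt_le_neg {f f' : ℝ → ℝ} {ε : ℝ} (hε : 0 < ε)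
    (hf : ∀ᶠ x in atTop, HasDerivAt f (f' x) x) (hf' : ∀ᶠ x in atTop, f' x ≤ -ε) :
    Tendsto f atTop atBot := by
  obtain ⟨X, hX⟩ := (hf.and hf').exists_forall_of_atTop
  have hline : Tendsto (fun x => f X - ε * (x - X)) atTop atBot :=
    tendsto_atBot_add_const_left _ _ <| tendsto_neg_atTop_atBot.comp <|
      (tendsto_atTop_add_const_right _ _ tendsto_id).const_mul_atTop hε
  refine tendsto_atBot_mono' _ ?_ hline
  filter_upwards [eventually_ge_atTop X] with x hx
  refine image_le_of_deriv_right_le_deriv_boundary (f' := f') (B := fun y => f X - ε * (y - X))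
    (B' := fun _ => -ε)
    (fun y hy => (hX y hy.1).1.continuousAt.continuousWithinAt)
    (fun y hy => (hX y hy.1).1.hasDerivWithinAt) (by simp) (by fun_prop)
    (fun y _ => ?_) (fun y hy => (hX y hy.1).2) ⟨hx, le_rfl⟩
  simpa using ((hasDerivAt_id y).sub_const X |>.const_mul ε).const_sub (f X) |>.hasDerivWithinAt

namespace IsSolution

variable {σ : ℝ} {U : Set ℝ} {c h : ℝ → ℝ} {w₀ γ : ℝ} {w w' : ℝ → ℝ}

lemma ode (hw : IsSolution σ U c h w₀ γ w w') {x : ℝ} (hx : 0 ≤ x) :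
    σ ^ 2 / 2 * w' x + piU U c (w x) + h x = γ :=
  hw.2.2.2 x hx

lemma hasDerivWithinAt (hw : IsSolution σ U c h w₀ γ w w') {x : ℝ} (hx : 0 ≤ x) :
    HasDerivWithinAt w (w' x) (Ici x) x :=
  (hw.2.2.1 x hx).mono (Ici_subset_Ici.2 hx)

lemma hasDerivAt (hw : IsSolution σ U c h w₀ γ w w') {x : ℝ} (hx : 0 < x) :
    HasDerivAt w (w' x) x :=
  (hw.2.2.1 x hx.le).hasDerivAt (Ici_mem_nhds hx)

lemma continuousOn (hw : IsSolution σ U c h w₀ γ w w') : ContinuousOn w (Ici 0) :=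
  fun x hx => (hw.2.2.1 x hx).continuousWithinAt

lemma le_initial (hw : IsSolution σ U c h w₀ γ w w') (hσ : 0 < σ) (hUne : U.Nonempty)
    (hUcpt : IsCompact U) (hc : Continuous c) (hh : ∀ x, 0 ≤ x → 0 ≤ h x)
    (hγ : γ ≤ piU U c w₀) {x : ℝ} (hx : 0 ≤ x) : w x ≤ w₀ := by
  obtain ⟨K, hK⟩ := exists_lipschitzWith_piU hUne hUcpt hc
  have hσ2 : 0 < σ ^ 2 / 2 := by positivity
  suffices w x - w₀ ≤ 0 by linarith
  refine nonpos_of_hasDerivWithinAt_le_mul (f := fun y => w y - w₀) (K := K / (σ ^ 2 / 2))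
    ((hw.continuousOn.mono Icc_subset_Ici_self).sub continuousOn_const)
    (fun y hy => (hw.hasDerivWithinAt hy.1).sub_const w₀) (by simp [hw.1])
    (fun y hy hwy => ?_) x ⟨hx, le_rfl⟩
  have hπ : piU U c w₀ - piU U c (w y) ≤ K * (w y - w₀) := by
    have := hK.le_add_mul w₀ (w y)
    rw [Real.dist_eq, abs_of_nonpos (by linarith)] at this
    linarith
  have := hw.ode hy.1
  have := hh y hy.1
  rw [div_mul_eq_mul_div, le_div_iff₀ hσ2]
  linarith

lemma antitoneOn (hw : IsSolution σ U c h w₀ γ w w') (hσ : 0 < σ) (hUne : U.Nonempty)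
    (hUcpt : IsCompact U) (hc : Continuous c) (hhmono : StrictMonoOn h (Ici 0)) (hh0 : h 0 = 0)
    (hγ : γ ≤ piU U c w₀) : AntitoneOn w (Ici 0) := by
  have hh : ∀ x, 0 ≤ x → 0 ≤ h x := fun x hx => hh0 ▸ hhmono.monotoneOn self_mem_Ici hx hx
  intro a ha b hb hab
  obtain rfl | hab := hab.eq_or_lt
  · rfl
  set δ := b - a
  have hδ : 0 < δ := sub_pos.2 hab
  have hshift : ∀ y, 0 ≤ y → HasDerivAt (fun x => w (x + δ)) (w' (y + δ)) y := fun y hy =>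
    (hw.hasDerivAt (by linarith)).comp_add_const y δ
  have := image_le_of_deriv_right_lt_deriv_boundary' (a := 0) (b := a)
    (fun y hy => (hshift y hy.1).continuousAt.continuousWithinAt)
    (fun y hy => (hshift y hy.1).hasDerivWithinAt)
    (by simpa [hw.1] using hw.le_initial hσ hUne hUcpt hc hh hγ hδ.le)
    (hw.continuousOn.mono Icc_subset_Ici_self) (fun y hy => hw.hasDerivWithinAt hy.1)
    (fun y hy heq => ?_) ⟨ha, le_rfl⟩
  · simpa [δ] using this
  have hσ2 : 0 < σ ^ 2 / 2 := by positivity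
  have hy0 : 0 ≤ y + δ := by linarith [hy.1]
  have hode := hw.ode hy.1
  have hodeδ := hw.ode hy0
  have := hhmono hy.1 hy0 (lt_add_of_pos_right y hδ)
  rw [heq] at hodeδ
  nlinarith

lemma strictAntiOn (hw : IsSolution σ U c h w₀ γ w w') (hanti : AntitoneOn w (Ici 0))
    (hhmono : StrictMonoOn h (Ici 0)) : StrictAntiOn w (Ici 0) := by
  intro a ha b hb hab
  refine (hanti ha hb hab.le).lt_of_ne fun heq => ?_
  have hconst : ∀ x ∈ Icc a b, w x = w a := fun x hx =>
    le_antisymm (hanti ha (mem_Ici.2 (ha.trans hx.1)) hx.1)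
      (heq ▸ hanti (mem_Ici.2 (ha.trans hx.1)) hb hx.2)
  have hflat : ∀ x ∈ Ioo a b, h x = γ - piU U c (w a) := by
    intro x hx
    have hx0 : 0 < x := lt_of_le_of_lt ha hx.1
    have hmax : IsLocalMax w x := by
      filter_upwards [Ioo_mem_nhds hx.1 hx.2] with y hy
      rw [hconst y (Ioo_subset_Icc_self hy), hconst x (Ioo_subset_Icc_self hx)]
    have := hw.ode hx0.le
    rw [hmax.hasDerivAt_eq_zero (hw.hasDerivAt hx0), hconst x (Ioo_subset_Icc_self hx)] at this
    linarith
  obtain ⟨x₁, hax₁, hx₁b⟩ := exists_between hab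
  obtain ⟨x₂, hx₁x₂, hx₂b⟩ := exists_between hx₁b
  have := hhmono (mem_Ici.2 (ha.trans hax₁.le)) (mem_Ici.2 (ha.trans (hax₁.trans hx₁x₂).le)) hx₁x₂
  rw [hflat x₁ ⟨hax₁, hx₁b⟩, hflat x₂ ⟨hax₁.trans hx₁x₂, hx₂b⟩] at this
  exact this.false

lemma tendsto_atBot (hw : IsSolution σ U c h w₀ γ w w') (hσ : 0 < σ) (hUne : U.Nonempty)
    (hUcpt : IsCompact U) (hc : Continuous c) (hanti : AntitoneOn w (Ici 0))
    (hhtop : Tendsto h atTop atTop) : Tendsto w atTop atBot := by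
  rw [tendsto_atTop_atBot]
  intro L
  suffices ∃ x, 0 ≤ x ∧ w x ≤ L by
    obtain ⟨x, hx, hxL⟩ := this
    exact ⟨x, fun y hy => (hanti hx (mem_Ici.2 (hx.trans hy)) hy).trans hxL⟩
  by_contra! hL
  obtain ⟨K, hK⟩ := exists_lipschitzWith_piU hUne hUcpt hc
  obtain ⟨m, hm⟩ := (isCompact_Icc (a := L) (b := w₀)).bddBelow_image hK.continuous.continuousOn
  have hσ2 : 0 < σ ^ 2 / 2 := by positivity
  have hdiv : Tendsto w atTop atBot := by
    refine tendsto_atBot_of_hasDerivAt_le_neg one_pos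
      ((eventually_gt_atTop 0).mono fun x hx => hw.hasDerivAt hx) ?_
    filter_upwards [eventually_ge_atTop 0, hhtop.eventually_ge_atTop (γ - m + σ ^ 2 / 2)]
      with x hx hhx
    have hwx : w x ∈ Icc L w₀ := ⟨(hL x hx).le, hw.1 ▸ hanti self_mem_Ici hx hx⟩
    have := hm (mem_image_of_mem _ hwx)
    have := hw.ode hx
    nlinarith
  obtain ⟨x, hxL, hx⟩ := ((hdiv.eventually_le_atBot L).and (eventually_ge_atTop 0)).exists
  exact (hL x hx).not_ge hxL

end IsSolution

theorem stmt_10_general (σ : ℝ) (hσ : 0 < σ) (U : Set ℝ) (hUne : U.Nonempty) (hUcpt : IsCompact U)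
    (c : ℝ → ℝ) (hc : Continuous c) (h : ℝ → ℝ)
    (hhmono : StrictMonoOn h (Set.Ici 0))
    (hh0 : h 0 = 0) (hhtop : Filter.Tendsto h Filter.atTop Filter.atTop)
    (w₀ γ : ℝ) (w w' : ℝ → ℝ) (hw : IsSolution σ U c h w₀ γ w w')
    (hγ : γ ≤ piU U c w₀) :
    StrictAntiOn w (Set.Ioi 0) ∧ Filter.Tendsto w Filter.atTop Filter.atBot := by
  have hanti := hw.antitoneOn hσ hUne hUcpt hc hhmono hh0 hγ
  exact ⟨(hw.strictAntiOn hanti hhmono).mono Ioi_subset_Ici_self,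
    hw.tendsto_atBot hσ hUne hUcpt hc hanti hhtop⟩

theorem stmt_10 (σ : ℝ) (hσ : 0 < σ) (U : Set ℝ) (hUne : U.Nonempty) (hUcpt : IsCompact U)
    (c : ℝ → ℝ) (hc : Continuous c) (h : ℝ → ℝ)
    (hhcont : ContinuousOn h (Set.Ici 0)) (hhmono : StrictMonoOn h (Set.Ici 0))
    (hh0 : h 0 = 0) (hhtop : Filter.Tendsto h Filter.atTop Filter.atTop)
    (w₀ γ : ℝ) (w w' : ℝ → ℝ) (hw : IsSolution σ U c h w₀ γ w w')
    (hγ : γ ≤ piU U c w₀) :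
    StrictAntiOn w (Set.Ioi 0) ∧ Filter.Tendsto w Filter.atTop Filter.atBot :=
  stmt_10_general σ hσ U hUne hUcpt c hc h hhmono hh0 hhtop w₀ γ w w' hw hγ
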